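/- arXiv:2208.10905 — 2 statements merged into one kernel-verified Lean document; each statement's English description precedes it below -/
import Mathlib

section
/- Let E be a group and F a finite central subgroup such that E/F is a finitely generated abelian group. Then E contains an abelian subgroup of finite index (E is virtually abelian). -/
theorem stmt_5 {E : Type*} [Group E] (F : Subgroup E) [F.Normal] [Finite F]
    (hF : F ≤ Subgroup.center E)
    (hab : ∀ a b : E ⧸ F, a * b = b * a)
    (hfg : Group.FG (E ⧸ F)) :
    ∃ H : Subgroup E, H.index ≠ 0 ∧ ∀ x ∈ H, ∀ y ∈ H, x * y = y * x := by
  obtain ⟨S, hS⟩ := hfg.1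
  choose g hg using QuotientGroup.mk'_surjective F
  -- commutators live in F
  have hcomm : ∀ a x : E, x * a * x⁻¹ * a⁻¹ ∈ F := by
    intro a x
    rw [← QuotientGroup.eq_one_iff (N := F)]
    show ((x * a * x⁻¹ * a⁻¹ : E) : E ⧸ F) = 1
    rw [QuotientGroup.mk_mul, QuotientGroup.mk_mul, QuotientGroup.mk_mul,
      QuotientGroup.mk_inv, QuotientGroup.mk_inv, hab (x : E ⧸ F) a]
    group
  -- the commutator homomorphism
  have hφ : ∀ a : E, ∃ φ : E →* F, ∀ x, (φ x : E) = x * a * x⁻¹ * a⁻¹ := by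
    intro a
    refine ⟨{ toFun := fun x => ⟨x * a * x⁻¹ * a⁻¹, hcomm a x⟩,
              map_one' := ?_, map_mul' := ?_ }, fun x => rfl⟩
    · ext; simp
    · intro x y
      have hy := Subgroup.mem_center_iff.1 (hF (hcomm a y))
      ext
      show x * y * a * (x * y)⁻¹ * a⁻¹ = (x * a * x⁻¹ * a⁻¹) * (y * a * y⁻¹ * a⁻¹)
      have h1 : y * a = (y * a * y⁻¹ * a⁻¹) * (a * y) := by group
      calc x * y * a * (x * y)⁻¹ * a⁻¹
          = x * (y * a) * y⁻¹ * x⁻¹ * a⁻¹ := by group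
        _ = x * ((y * a * y⁻¹ * a⁻¹) * (a * y)) * y⁻¹ * x⁻¹ * a⁻¹ := by nth_rewrite 1 [h1]; rfl
        _ = (x * (y * a * y⁻¹ * a⁻¹)) * (a * x⁻¹ * a⁻¹) := by group
        _ = ((y * a * y⁻¹ * a⁻¹) * x) * (a * x⁻¹ * a⁻¹) := by rw [hy x]
        _ = (y * a * y⁻¹ * a⁻¹) * (x * a * x⁻¹ * a⁻¹) := by group
        _ = (x * a * x⁻¹ * a⁻¹) * (y * a * y⁻¹ * a⁻¹) := (hy _).symm
  -- each centralizer has finite index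
  have hcent : ∀ a : E, (Subgroup.centralizer {a}).FiniteIndex := by
    intro a
    obtain ⟨φ, hφa⟩ := hφ a
    have hker : φ.ker ≤ Subgroup.centralizer {a} := by
      intro x hx
      rw [Subgroup.mem_centralizer_singleton_iff]
      have h1 : (φ x : E) = 1 := by rw [hx]; rfl
      rw [hφa] at h1
      have h2 : x * a = a * x := by
        have h3 : x * a * x⁻¹ = a := mul_inv_eq_one.1 h1
        calc x * a = (x * a * x⁻¹) * x := by group
          _ = a * x := by rw [h3]
      exact h2
    refine ⟨fun h0 => ?_⟩
    have hdvd := Subgroup.index_dvd_of_le hker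
    rw [h0, zero_dvd_iff, Subgroup.index_ker] at hdvd
    exact Nat.card_ne_zero.2 ⟨⟨1⟩, inferInstance⟩ hdvd
  -- the subgroup
  refine ⟨⨅ s ∈ S, Subgroup.centralizer {g s}, ?_, ?_⟩
  · exact (Subgroup.finiteIndex_iInf' _ fun s _ => hcent (g s)).index_ne_zero
  · intro x hx y hy
    simp only [Subgroup.mem_iInf] at hx hy
    -- closure of lifts together with F is everything
    have hC : Subgroup.closure ((fun s => g s) '' ↑S ∪ (F : Set E)) = ⊤ := by
      set C := Subgroup.closure ((fun s => g s) '' ↑S ∪ (F : Set E)) with hCdef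
      have hFC : F ≤ C := by
        intro z hz
        exact Subgroup.subset_closure (Set.mem_union_right _ hz)
      have hmap : C.map (QuotientGroup.mk' F) = ⊤ := by
        rw [hCdef, MonoidHom.map_closure, eq_top_iff, ← hS]
        apply Subgroup.closure_mono
        intro s hs
        exact ⟨g s, Set.mem_union_left _ (Set.mem_image_of_mem _ hs), hg s⟩
      have := congrArg (Subgroup.comap (QuotientGroup.mk' F)) hmap
      rwa [Subgroup.comap_map_eq, QuotientGroup.ker_mk', sup_of_le_left hFC,
        Subgroup.comap_top] at this
    have hyC : y ∈ Subgroup.closure ((fun s => g s) '' ↑S ∪ (F : Set E)) := hC ▸ Subgroup.mem_top y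
    refine Subgroup.closure_induction (fun z hz => ?_) (by simp) ?_ ?_ hyC
    · rcases hz with ⟨s, hs, rfl⟩ | hz
      · exact (hx s hs (g s) rfl).symm
      · exact Subgroup.mem_center_iff.1 (hF hz) x
    · intro z w _ _ hzx hwx
      rw [← mul_assoc, hzx, mul_assoc, hwx, ← mul_assoc]
    · intro z _ hzx
      calc x * z⁻¹ = z⁻¹ * (z * x) * z⁻¹ := by group
        _ = z⁻¹ * (x * z) * z⁻¹ := by rw [hzx]
        _ = z⁻¹ * x := by group
end

section
/- Let E be a group and F a finite central subgroup such that E/F is a finitely generated group containing an abelian subgroup of finite index. Then E itself contains an abelian subgroup of finite index. -/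
/-!
Let `K` be the preimage in `E` of an abelian subgroup of finite index of `E ⧸ F`. It has finite
index in `E`, and `E` is finitely generated (an extension of a finitely generated group by a finite
one), so `K` is finitely generated by Schreier's lemma. Every commutator of `K` maps to `1` in the
abelian image, hence lies in the finite group `F`. A finitely generated group with finitely many
commutators has a centre of finite index, and the centre of `K` is the required subgroup.
-/

open Subgroup

theorem Group.fg_of_fg_normal_of_fg_quotient {G : Type*} [Group G] (N : Subgroup G) [N.Normal]
    [Group.FG N] [Group.FG (G ⧸ N)] : Group.FG G := by
  obtain ⟨S, hS, hSfin⟩ := Group.fg_iff.mp ‹Group.FG (G ⧸ N)›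
  let L := closure ((Quotient.out : G ⧸ N → G) '' S)
  have hL : L.FG := ⟨(hSfin.image Quotient.out).toFinset, by simp [L]⟩
  have hLN : L.map (QuotientGroup.mk' N) = ⊤ := by
    rw [MonoidHom.map_closure, Set.image_image, ← hS]
    simp
  have hsup : L ⊔ N = ⊤ := by
    rw [← QuotientGroup.ker_mk' N, ← comap_map_eq, hLN, comap_top]
  rw [Group.fg_def, ← hsup]
  exact hL.sup ((Group.fg_iff_subgroup_fg N).mp ‹_›)

theorem Subgroup.finite_commutatorSet_of_commute_map {G Q : Type*} [Group G] [Group Q]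
    (f : G →* Q) (hf : (f.ker : Set G).Finite) (K : Subgroup G)
    (hK : ∀ x ∈ K, ∀ y ∈ K, f x * f y = f y * f x) : Finite (commutatorSet K) := by
  have hsub : commutatorSet K ⊆ K.subtype ⁻¹' f.ker := by
    rintro _ ⟨x, y, rfl⟩
    simp only [Set.mem_preimage, SetLike.mem_coe, MonoidHom.mem_ker, map_commutatorElement,
      subtype_apply, commutatorElement_eq_one_iff_mul_comm]
    exact hK x x.2 y y.2
  exact ((hf.preimage K.subtype_injective.injOn).subset hsub).to_subtype

theorem stmt_6_general {E : Type*} [Group E] (F : Subgroup E) [F.Normal] [Finite F]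
    (hfg : Group.FG (E ⧸ F))
    (hva : ∃ H : Subgroup (E ⧸ F), H.index ≠ 0 ∧ ∀ x ∈ H, ∀ y ∈ H, x * y = y * x) :
    ∃ H : Subgroup E, H.index ≠ 0 ∧ ∀ x ∈ H, ∀ y ∈ H, x * y = y * x := by
  obtain ⟨H, hH, hHcomm⟩ := hva
  have : Group.FG E := Group.fg_of_fg_normal_of_fg_quotient F
  let K := H.comap (QuotientGroup.mk' F)
  have hK : K.index ≠ 0 := by
    rwa [index_comap_of_surjective _ (QuotientGroup.mk'_surjective F)]
  have : K.FiniteIndex := ⟨hK⟩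
  have : Finite (commutatorSet K) :=
    finite_commutatorSet_of_commute_map (QuotientGroup.mk' F)
      (by rw [QuotientGroup.ker_mk']; exact Set.toFinite _) K
      (fun x hx y hy => hHcomm _ hx _ hy)
  refine ⟨(center K).map K.subtype, ?_, ?_⟩
  · rw [index_map_subtype]
    exact mul_ne_zero FiniteIndex.index_ne_zero hK
  · rintro _ ⟨x, hx, rfl⟩ _ ⟨y, -, rfl⟩
    exact congrArg Subtype.val (mem_center_iff.mp hx y).symm

theorem stmt_6 {E : Type*} [Group E] (F : Subgroup E) [F.Normal] [Finite F]
    (hF : F ≤ Subgroup.center E)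
    (hfg : Group.FG (E ⧸ F))
    (hva : ∃ H : Subgroup (E ⧸ F), H.index ≠ 0 ∧ ∀ x ∈ H, ∀ y ∈ H, x * y = y * x) :
    ∃ H : Subgroup E, H.index ≠ 0 ∧ ∀ x ∈ H, ∀ y ∈ H, x * y = y * x :=
  stmt_6_general F hfg hva
end
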